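/- arXiv:1901.08390 — 3 statements merged into one kernel-verified Lean document; each statement's English description precedes it below -/
import Mathlib

section
/- Let N ≥ 2 and let z_1 > z_2 > … > z_N be real numbers that are precisely the zeros of the N-th physicists' Hermite polynomial H_N. Define the symmetric matrix A ∈ ℝ^{N×N} by A_{ij} := 1/(z_i − z_j)² for i ≠ j and A_{ii} := −∑_{j≠i} 1/(z_i − z_j)². Then the matrix E − A has eigenvalues 1, 2, …, N (counted with multiplicity). -/
open scoped BigOperators
open Polynomial

noncomputable section

/-- The `n`-th physicists' Hermite polynomial (as a function),
`H_n(x) = (-1)^n e^{x²} (d/dx)^n e^{-x²}`. -/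
def physHermite (n : ℕ) (x : ℝ) : ℝ :=
  (-1 : ℝ)^n * Real.exp (x^2) * iteratedDeriv n (fun y => Real.exp (-y^2)) x

/-!
The zeros of `H_N` satisfy the Stieltjes relations `∑_{j ≠ i} 1 / (z i - z j) = z i`: for the
nodal polynomial `ω = ∏ (X - z j)` one has `ω''(z i) = 2 ω'(z i) ∑_{j ≠ i} 1 / (z i - z j)`, while
the Hermite equation `H'' = 2 X H' - 2 N H` gives `ω''(z i) = 2 z i ω'(z i)`.

Given these relations, `A` maps the Vandermonde column `(z j ^ k)_j` to the values at the nodes of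
a polynomial of degree `k` with leading coefficient `-k`. Hence `A V = V T` for the invertible
Vandermonde matrix `V` and an upper triangular `T` with diagonal `0, -1, …, -(N - 1)`, so `1 - A`
is similar to `1 - T`, whose diagonal is `1, …, N`.
-/

open Finset

namespace Polynomial

theorem derivative_hermite_succ (n : ℕ) :
    derivative (hermite (n + 1)) = ((n : ℤ[X]) + 1) * hermite n := by
  induction n with
  | zero => simp
  | succ n ih =>
    rw [hermite_succ (n + 1), derivative_sub, derivative_mul, derivative_X, one_mul, ih,
      derivative_mul, hermite_succ]
    push_cast
    simp only [derivative_add, derivative_natCast, derivative_one]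
    ring

theorem derivative_derivative_hermite (n : ℕ) :
    derivative (derivative (hermite n)) = X * derivative (hermite n) - (n : ℤ[X]) * hermite n := by
  cases n with
  | zero => simp
  | succ n =>
    rw [derivative_hermite_succ, derivative_mul, hermite_succ]
    simp only [derivative_add, derivative_natCast, derivative_one]
    push_cast
    ring

end Polynomial

-- Mathlib's `hermite n` is the probabilists' Hermite polynomial `He_n`.
theorem physHermite_eq_aeval_hermite (n : ℕ) (x : ℝ) :
    physHermite n x = √2 ^ n * aeval (√2 * x) (hermite n) := by
  have hgauss : (fun y : ℝ => Real.exp (-y ^ 2)) =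
      fun y => (fun u : ℝ => Real.exp (-(u ^ 2 / 2))) (√2 * y) := by
    ext y; congr 1; rw [mul_pow, Real.sq_sqrt zero_le_two]; ring
  have hsmooth : ContDiff ℝ n (fun u : ℝ => Real.exp (-(u ^ 2 / 2))) := by fun_prop
  rw [physHermite, hgauss, iteratedDeriv_comp_const_mul hsmooth, iteratedDeriv_eq_iterate]
  dsimp only
  rw [deriv_gaussian_eq_hermite_mul_gaussian]
  have hexp : Real.exp (x ^ 2) * Real.exp (-((√2 * x) ^ 2 / 2)) = 1 := by
    rw [← Real.exp_add, mul_pow, Real.sq_sqrt zero_le_two]; simp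
  have hsign : (-1 : ℝ) ^ n * (-1) ^ n = 1 := by rw [← mul_pow]; simp
  linear_combination (√2 ^ n * aeval (√2 * x) (hermite n)) * ((-1) ^ n * (-1) ^ n * hexp + hsign)

namespace Lagrange

variable {F ι : Type*} [Field F] {s : Finset ι} {v : ι → F}

theorem eq_nodal_of_monic_of_eval_eq_zero {p : F[X]} (hp : p.Monic) (hdeg : p.natDegree = #s)
    (hvs : Set.InjOn v s) (hroot : ∀ i ∈ s, eval (v i) p = 0) : p = nodal s v := by
  have hdeg' : p.degree = #s := by rw [degree_eq_natDegree hp.ne_zero, hdeg]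
  refine eq_of_degree_sub_lt_of_eval_index_eq _ hvs ?_ fun i hi => ?_
  · refine (degree_sub_lt_left ?_ hp.ne_zero ?_).trans_eq hdeg'
    · rw [hdeg', degree_nodal]
    · rw [hp.leadingCoeff, nodal_monic.leadingCoeff]
  · rw [hroot i hi, eval_nodal_at_node hi]

variable [DecidableEq ι]

theorem eval_derivative_nodal_eq_mul_sum_inv {x : F} (hx : ∀ j ∈ s, x ≠ v j) :
    eval x (derivative (nodal s v)) = eval x (nodal s v) * ∑ j ∈ s, (x - v j)⁻¹ := by
  rw [derivative_nodal, eval_finsetSum, mul_sum]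
  refine sum_congr rfl fun j hj => ?_
  rw [nodal_eq_mul_nodal_erase hj, eval_mul, eval_sub, eval_X, eval_C,
    mul_comm (x - v j), mul_assoc, mul_inv_cancel₀ (sub_ne_zero.mpr (hx j hj)), mul_one]

theorem eval_derivative_derivative_nodal_at_node (hvs : Set.InjOn v s) {i : ι} (hi : i ∈ s) :
    eval (v i) (derivative (derivative (nodal s v))) =
      2 * eval (v i) (derivative (nodal s v)) * ∑ j ∈ s.erase i, (v i - v j)⁻¹ := by
  have hnode : ∀ j ∈ s.erase i, v i ≠ v j := fun j hj h =>
    (mem_erase.mp hj).1 (hvs (mem_of_mem_erase hj) hi h.symm)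
  rw [eval_nodal_derivative_eval_node_eq hi, mul_assoc,
    ← eval_derivative_nodal_eq_mul_sum_inv hnode, nodal_eq_mul_nodal_erase hi, derivative_mul,
    derivative_X_sub_C, one_mul, derivative_add, derivative_mul, derivative_X_sub_C, one_mul]
  simp only [eval_add, eval_mul, eval_sub, eval_X, eval_C, sub_self, zero_mul, add_zero]
  ring

end Lagrange

theorem sum_inv_sub_eq_of_physHermite_eq_zero {N : ℕ} (z : Fin N → ℝ) (hz : Function.Injective z)
    (hzero : ∀ i, physHermite N (z i) = 0) (i : Fin N) :
    ∑ j ∈ univ.erase i, (z i - z j)⁻¹ = z i := by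
  set w : Fin N → ℝ := fun i => √2 * z i
  have hw : Set.InjOn w (univ : Finset (Fin N)) := fun a _ b _ h =>
    hz (mul_left_cancel₀ (by positivity) h)
  set He : ℝ[X] := (hermite N).map (Int.castRingHom ℝ)
  have hHe_monic : He.Monic := (hermite_monic N).map _
  have hHe_nodal : He = Lagrange.nodal univ w := by
    refine Lagrange.eq_nodal_of_monic_of_eval_eq_zero hHe_monic ?_ hw fun j _ => ?_
    · rw [card_univ, Fintype.card_fin, natDegree_map_eq_of_injective (RingHom.injective_int _),
        natDegree_hermite]
    · have h := hzero j
      rw [physHermite_eq_aeval_hermite, aeval_def, eval₂_eq_eval_map] at h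
      exact (mul_eq_zero.mp h).resolve_left (by positivity)
  have hode : derivative (derivative He) = X * derivative He - (N : ℝ[X]) * He := by
    rw [derivative_map, derivative_map, derivative_derivative_hermite, Polynomial.map_sub,
      Polynomial.map_mul, Polynomial.map_mul, Polynomial.map_X, Polynomial.map_natCast]
  have hnode : eval (w i) He = 0 := hHe_nodal ▸ Lagrange.eval_nodal_at_node (mem_univ i)
  have hHe' : eval (w i) (derivative He) ≠ 0 := by
    rw [hHe_nodal, Lagrange.eval_nodal_derivative_eval_node_eq (mem_univ i)]
    exact Lagrange.eval_nodal_not_at_node fun j hj h =>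
      (mem_erase.mp hj).1 (hw (mem_univ _) (mem_univ _) h).symm
  have hstieltjes : ∑ j ∈ univ.erase i, (w i - w j)⁻¹ = w i / 2 := by
    have h := Lagrange.eval_derivative_derivative_nodal_at_node hw (mem_univ i)
    rw [← hHe_nodal, hode, eval_sub, eval_mul, eval_mul, hnode, eval_X, mul_zero, sub_zero] at h
    refine mul_left_cancel₀ hHe' ?_
    linear_combination (-1 / 2 : ℝ) * h
  have hscale : ∀ j ∈ univ.erase i, (z i - z j)⁻¹ = √2 * (w i - w j)⁻¹ := fun j _ => by
    simp only [w, ← mul_sub, mul_inv, ← mul_assoc]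
    rw [mul_inv_cancel₀ (by positivity), one_mul]
  rw [sum_congr rfl hscale, ← mul_sum, hstieltjes]
  linear_combination (z i / 2) * Real.sq_sqrt zero_le_two

section Calogero

open Matrix

variable {K : Type*} [Field K] {N : ℕ}

def calogeroMatrix (z : Fin N → K) : Matrix (Fin N) (Fin N) K :=
  Matrix.of fun i j =>
    if i = j then -∑ l ∈ univ.erase i, 1 / (z i - z l) ^ 2 else 1 / (z i - z j) ^ 2

theorem calogeroMatrix_mulVec_apply (z : Fin N → K) (f : Fin N → K) (i : Fin N) :
    (calogeroMatrix z *ᵥ f) i = ∑ j ∈ univ.erase i, (f j - f i) / (z i - z j) ^ 2 := by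
  have hoff : ∀ j ∈ univ.erase i, calogeroMatrix z i j * f j = f j / (z i - z j) ^ 2 :=
    fun j hj => by simp [calogeroMatrix, (ne_of_mem_erase hj).symm, div_eq_inv_mul]
  rw [mulVec, dotProduct, ← add_sum_erase _ _ (mem_univ i), sum_congr rfl hoff]
  simp only [calogeroMatrix, of_apply, if_pos, neg_mul, sum_mul, one_div_mul_eq_div, sub_div,
    sum_sub_distrib]
  ring

theorem pow_sub_pow_div_sub_sq {x y : K} (h : x ≠ y) (k : ℕ) :
    (y ^ k - x ^ k) / (x - y) ^ 2 = -∑ t ∈ range k, x ^ (k - 1 - t) * (y ^ t / (x - y)) := by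
  have hxy : x - y ≠ 0 := sub_ne_zero.mpr h
  rw [← geom_sum₂_mul, div_eq_iff (pow_ne_zero 2 hxy), sum_mul, neg_mul, sum_mul,
    ← sum_neg_distrib]
  refine sum_congr rfl fun t _ => ?_
  field_simp
  ring

theorem pow_div_sub_eq_sub_sum {x y : K} (h : x ≠ y) (t : ℕ) :
    y ^ t / (x - y) = x ^ t / (x - y) - ∑ u ∈ range t, x ^ u * y ^ (t - 1 - u) := by
  have hxy : x - y ≠ 0 := sub_ne_zero.mpr h
  rw [eq_sub_iff_add_eq, ← eq_sub_iff_add_eq', ← sub_div, ← geom_sum₂_mul,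
    mul_div_cancel_right₀ _ hxy]

def cauchyPoly (z : Fin N → K) (t : ℕ) : K[X] :=
  X ^ (t + 1) - ∑ u ∈ range t, (C (∑ j, z j ^ (t - 1 - u)) * X ^ u - X ^ (t - 1))

theorem eval_cauchyPoly {z : Fin N → K} (hz : Function.Injective z)
    (hs : ∀ i, ∑ j ∈ univ.erase i, (z i - z j)⁻¹ = z i) (i : Fin N) (t : ℕ) :
    eval (z i) (cauchyPoly z t) = ∑ j ∈ univ.erase i, z j ^ t / (z i - z j) := by
  have hne : ∀ j ∈ univ.erase i, z i ≠ z j := fun j hj h => ne_of_mem_erase hj (hz h).symm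
  have hpow : ∀ u ∈ range t, z i ^ u * ∑ j ∈ univ.erase i, z j ^ (t - 1 - u)
      = (∑ j, z j ^ (t - 1 - u)) * z i ^ u - z i ^ (t - 1) := fun u hu => by
    rw [sum_erase_eq_sub (mem_univ i), mul_sub, mul_comm, ← pow_add,
      Nat.add_sub_of_le (Nat.le_sub_one_of_lt (mem_range.mp hu))]
  symm
  calc ∑ j ∈ univ.erase i, z j ^ t / (z i - z j)
      = ∑ j ∈ univ.erase i, (z i ^ t / (z i - z j) - ∑ u ∈ range t, z i ^ u * z j ^ (t - 1 - u)) :=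
        sum_congr rfl fun j hj => pow_div_sub_eq_sub_sum (hne j hj) t
    _ = z i ^ t * ∑ j ∈ univ.erase i, (z i - z j)⁻¹
          - ∑ u ∈ range t, z i ^ u * ∑ j ∈ univ.erase i, z j ^ (t - 1 - u) := by
        rw [sum_sub_distrib, sum_comm, mul_sum]
        simp only [div_eq_mul_inv, mul_sum]
    _ = eval (z i) (cauchyPoly z t) := by
        rw [hs i, sum_congr rfl hpow]
        simp only [cauchyPoly, eval_sub, eval_pow, eval_X, eval_finsetSum, eval_mul, eval_C,
          sum_sub_distrib]
        ring

theorem coeff_cauchyPoly_of_le (z : Fin N → K) {t m : ℕ} (h : t + 1 ≤ m) :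
    (cauchyPoly z t).coeff m = if m = t + 1 then 1 else 0 := by
  rw [cauchyPoly, coeff_sub, coeff_X_pow, finsetSum_coeff, sum_eq_zero, sub_zero]
  intro u hu
  have hu := mem_range.mp hu
  rw [coeff_sub, coeff_C_mul, coeff_X_pow, coeff_X_pow, if_neg (by omega), if_neg (by omega),
    mul_zero, sub_zero]

def calogeroPoly (z : Fin N → K) (k : ℕ) : K[X] :=
  -∑ t ∈ range k, X ^ (k - 1 - t) * cauchyPoly z t

theorem coeff_calogeroPoly_of_le (z : Fin N → K) {k m : ℕ} (h : k ≤ m) :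
    (calogeroPoly z k).coeff m = if m = k then -(k : K) else 0 := by
  have hterm : ∀ t ∈ range k, (X ^ (k - 1 - t) * cauchyPoly z t).coeff m = if m = k then 1 else 0 :=
    fun t ht => by
      have ht := mem_range.mp ht
      rw [coeff_X_pow_mul', if_pos (by omega), coeff_cauchyPoly_of_le z (by omega)]
      exact if_congr (by omega) rfl rfl
  rw [calogeroPoly, coeff_neg, finsetSum_coeff, sum_congr rfl hterm, sum_ite_irrel, sum_const,
    card_range, nsmul_one, sum_const_zero]
  split_ifs <;> simp

theorem natDegree_calogeroPoly_le (z : Fin N → K) (k : ℕ) : (calogeroPoly z k).natDegree ≤ k :=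
  natDegree_le_iff_coeff_eq_zero.mpr fun m hm => by
    rw [coeff_calogeroPoly_of_le z hm.le, if_neg hm.ne']

theorem calogeroMatrix_mulVec_pow {z : Fin N → K} (hz : Function.Injective z)
    (hs : ∀ i, ∑ j ∈ univ.erase i, (z i - z j)⁻¹ = z i) (k : ℕ) :
    calogeroMatrix z *ᵥ (fun j => z j ^ k) = fun i => eval (z i) (calogeroPoly z k) := by
  funext i
  have hne : ∀ j ∈ univ.erase i, z i ≠ z j := fun j hj h => ne_of_mem_erase hj (hz h).symm
  calc (calogeroMatrix z *ᵥ fun j => z j ^ k) i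
      = ∑ j ∈ univ.erase i, -∑ t ∈ range k, z i ^ (k - 1 - t) * (z j ^ t / (z i - z j)) := by
        rw [calogeroMatrix_mulVec_apply]
        exact sum_congr rfl fun j hj => pow_sub_pow_div_sub_sq (hne j hj) k
    _ = -∑ t ∈ range k, z i ^ (k - 1 - t) * ∑ j ∈ univ.erase i, z j ^ t / (z i - z j) := by
        rw [sum_neg_distrib, sum_comm]
        simp only [mul_sum]
    _ = eval (z i) (calogeroPoly z k) := by
        simp only [calogeroPoly, eval_neg, eval_finsetSum, eval_mul, eval_pow, eval_X,
          eval_cauchyPoly hz hs]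

theorem calogeroMatrix_mul_vandermonde {z : Fin N → K} (hz : Function.Injective z)
    (hs : ∀ i, ∑ j ∈ univ.erase i, (z i - z j)⁻¹ = z i) :
    calogeroMatrix z * vandermonde z =
      vandermonde z * of fun m k : Fin N => (calogeroPoly z k).coeff m := by
  ext i k
  have hdeg : (calogeroPoly z k).natDegree < N := (natDegree_calogeroPoly_le z k).trans_lt k.isLt
  have h := congrFun (calogeroMatrix_mulVec_pow hz hs k) i
  rw [eval_eq_sum_range' hdeg, ← Fin.sum_univ_eq_sum_range] at h
  simpa only [mul_apply, vandermonde_apply, of_apply, mulVec, dotProduct, mul_comm (z i ^ _)]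
    using h

theorem charpoly_one_sub_calogeroMatrix {z : Fin N → K} (hz : Function.Injective z)
    (hs : ∀ i, ∑ j ∈ univ.erase i, (z i - z j)⁻¹ = z i) :
    (1 - calogeroMatrix z).charpoly = ∏ k ∈ range N, (X - C ((k : K) + 1)) := by
  set T : Matrix (Fin N) (Fin N) K := of fun m k => (calogeroPoly z k).coeff m
  have hV : IsUnit (vandermonde z).det := (det_vandermonde_ne_zero_iff.mpr hz).isUnit
  have hsim : 1 - calogeroMatrix z = vandermonde z * (1 - T) * (vandermonde z)⁻¹ := by
    rw [mul_sub, mul_one, sub_mul, ← calogeroMatrix_mul_vandermonde hz hs, mul_assoc,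
      mul_nonsing_inv _ hV, mul_one]
  have htri : (1 - T).IsUpperTriangular := fun i j (hji : j < i) => by
    simp only [T, Matrix.sub_apply, one_apply_ne hji.ne', of_apply]
    rw [coeff_calogeroPoly_of_le z (Fin.le_iff_val_le_val.mp hji.le),
      if_neg (Fin.val_ne_of_ne hji.ne'), sub_zero]
  rw [hsim]
  refine (charpoly_units_conj (nonsingInvUnit _ hV) (1 - T)).trans ?_
  rw [charpoly_of_isUpperTriangular _ htri, ← Fin.prod_univ_eq_prod_range]
  refine prod_congr rfl fun k _ => ?_
  simp only [T, Matrix.sub_apply, one_apply_eq, of_apply]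
  rw [coeff_calogeroPoly_of_le z le_rfl, if_pos rfl, sub_neg_eq_add, add_comm]

end Calogero

theorem statement7_general (N : ℕ) (z : Fin N → ℝ) (hz : StrictAnti z)
    (hzero : ∀ i, physHermite N (z i) = 0)
    (A : Matrix (Fin N) (Fin N) ℝ)
    (hA : ∀ i j : Fin N, A i j =
      if i = j then -∑ l ∈ Finset.univ.erase i, 1/(z i - z l)^2
      else 1/(z i - z j)^2) :
    (1 - A).charpoly = ∏ k ∈ Finset.range N, (X - C ((k : ℝ) + 1)) := by
  obtain rfl : A = calogeroMatrix z := Matrix.ext hA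
  exact charpoly_one_sub_calogeroMatrix hz.injective
    (sum_inv_sub_eq_of_physHermite_eq_zero z hz.injective hzero)

/-- For `z` the vector of ordered zeros of the Hermite polynomial `H_N`, the matrix
`A` with `A_{ij} = 1/(z_i - z_j)²` for `i ≠ j` and `A_{ii} = -∑_{j≠i} 1/(z_i - z_j)²`
is such that `E - A` has eigenvalues `1, 2, …, N` counted with multiplicity
(expressed via the characteristic polynomial). -/
theorem statement7 (N : ℕ) (hN : 2 ≤ N) (z : Fin N → ℝ) (hz : StrictAnti z)
    (hzero : ∀ i, physHermite N (z i) = 0)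
    (hall : ∀ w : ℝ, physHermite N w = 0 → ∃ i, w = z i)
    (A : Matrix (Fin N) (Fin N) ℝ)
    (hA : ∀ i j : Fin N, A i j =
      if i = j then -∑ l ∈ Finset.univ.erase i, 1/(z i - z l)^2
      else 1/(z i - z j)^2) :
    (1 - A).charpoly = ∏ k ∈ Finset.range N, (X - C ((k : ℝ) + 1)) :=
  statement7_general N z hz hzero A hA
end
end

section
/- Let N ≥ 1, let ν > 0, let x lie in the interior of C_N^B, and let φ : [0,∞) → ℝ^N be a continuously differentiable function taking values in the interior of C_N^B with φ(0) = x that solves the ODE of type B_N with parameter ν. Then for all t ≥ 0, ‖φ(t)‖² = 2N(N + ν − 1)·t + ‖x‖², where ‖·‖ is the Euclidean norm on ℝ^N. -/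
/-!
Along a solution, `d/dt ‖φ‖² = 2 ∑ᵢ φᵢ Bᵢ(φ)` with `Bᵢ` the drift. Pairing the terms `(i, j)` and
`(j, i)` of the double sum, `xᵢ/(xᵢ ∓ xⱼ) + xⱼ/(xⱼ ∓ xᵢ) = 1`, so `∑ᵢ xᵢ Bᵢ(x) = N(N - 1 + ν)` at every
point of the chamber: `‖φ‖²` has constant derivative and is therefore affine in `t`.
-/

open scoped BigOperators

noncomputable section

/-- The interior of the closed Weyl chamber of type B. -/
def interiorB {N : ℕ} (x : Fin N → ℝ) : Prop := StrictAnti x ∧ ∀ i, 0 < x i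

/-- `φ` solves the ODE of type `B_N` with parameter `ν` on `[0,∞)`. -/
def solvesB {N : ℕ} (ν : ℝ) (φ : ℝ → Fin N → ℝ) : Prop :=
  ∀ t ∈ Set.Ici (0:ℝ), ∀ i : Fin N,
    HasDerivWithinAt (fun s => φ s i)
      ((∑ j ∈ Finset.univ.erase i,
          (1 / (φ t i - φ t j) + 1 / (φ t i + φ t j))) + ν / φ t i)
      (Set.Ici 0) t

open Finset Set

theorem Finset.two_mul_sum_sum_erase_of_add_swap {ι R : Type*} [Fintype ι] [DecidableEq ι]
    [CommRing R] (f : ι → ι → R) (c : R) (hf : ∀ i j, i ≠ j → f i j + f j i = c) :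
    2 * ∑ i, ∑ j ∈ univ.erase i, f i j = Fintype.card ι * (Fintype.card ι - 1) * c := by
  have hswap : ∑ i, ∑ j ∈ univ.erase i, f i j = ∑ i, ∑ j ∈ univ.erase i, f j i :=
    sum_comm' (by simp [and_comm, eq_comm])
  calc 2 * ∑ i, ∑ j ∈ univ.erase i, f i j
      = ∑ i, ∑ j ∈ univ.erase i, (f i j + f j i) := by
        rw [two_mul]; nth_rewrite 2 [hswap]; simp only [sum_add_distrib]
    _ = ∑ i : ι, ∑ j ∈ univ.erase i, c :=
        sum_congr rfl fun i _ => sum_congr rfl fun j hj => hf i j (ne_of_mem_erase hj).symm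
    _ = Fintype.card ι * (Fintype.card ι - 1) * c := by
        rcases isEmpty_or_nonempty ι with hι | hι
        · simp
        · simp [card_erase_of_mem, Nat.cast_sub Fintype.card_pos, mul_assoc]

def driftB {ι : Type*} [Fintype ι] [DecidableEq ι] (ν : ℝ) (x : ι → ℝ) (i : ι) : ℝ :=
  (∑ j ∈ univ.erase i, (1 / (x i - x j) + 1 / (x i + x j))) + ν / x i

theorem sum_mul_driftB {ι : Type*} [Fintype ι] [DecidableEq ι] (ν : ℝ) {x : ι → ℝ}
    (hinj : Function.Injective x) (hpos : ∀ i, 0 < x i) :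
    ∑ i, x i * driftB ν x i = Fintype.card ι * (Fintype.card ι - 1 + ν) := by
  set f : ι → ι → ℝ := fun i j => x i / (x i - x j) + x i / (x i + x j)
  have hpair : ∀ i j, i ≠ j → f i j + f j i = 2 := by
    intro i j hij
    have hsub : x i - x j ≠ 0 := sub_ne_zero.2 (hinj.ne hij)
    have hsub' : x j - x i ≠ 0 := sub_ne_zero.2 (hinj.ne hij.symm)
    have hadd : x i + x j ≠ 0 := (add_pos (hpos i) (hpos j)).ne'
    have hadd' : x j + x i ≠ 0 := (add_pos (hpos j) (hpos i)).ne'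
    simp only [f]
    field_simp
    ring
  have hterm : ∀ i, x i * driftB ν x i = ∑ j ∈ univ.erase i, f i j + ν := by
    intro i
    simp only [driftB, f, mul_add, mul_sum, mul_div_cancel₀ _ (hpos i).ne', mul_one_div]
  have hsum := two_mul_sum_sum_erase_of_add_swap f 2 hpair
  simp only [hterm, sum_add_distrib, sum_const, card_univ, nsmul_eq_mul]
  linarith

theorem eq_mul_sub_add_of_hasDerivWithinAt_Ici {f : ℝ → ℝ} {c a : ℝ}
    (hf : ∀ t ∈ Ici a, HasDerivWithinAt f c (Ici a) t) :
    ∀ t ∈ Ici a, f t = c * (t - a) + f a := by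
  intro t ht
  have hline : ∀ s, HasDerivAt (fun s => c * (s - a) + f a) c s := fun s => by
    simpa using (((hasDerivAt_id s).sub_const a).const_mul c).add_const (f a)
  refine eq_of_has_deriv_right_eq (b := t) (fun s hs => (hf s hs.1).mono (Ici_subset_Ici.2 hs.1))
    (fun s _ => (hline s).hasDerivWithinAt)
    (fun s hs => (hf s hs.1).continuousWithinAt.mono fun r hr => hr.1)
    (by fun_prop) (by simp) t ⟨ht, le_rfl⟩

theorem statement10_general (N : ℕ) (ν : ℝ)
    (x : Fin N → ℝ)
    (φ : ℝ → Fin N → ℝ) (hφ0 : φ 0 = x)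
    (hint : ∀ t ∈ Set.Ici (0:ℝ), interiorB (φ t))
    (hode : solvesB ν φ) :
    ∀ t ∈ Set.Ici (0:ℝ),
      ‖(WithLp.equiv 2 (Fin N → ℝ)).symm (φ t)‖^2
        = 2 * N * (N + ν - 1) * t + ‖(WithLp.equiv 2 (Fin N → ℝ)).symm x‖^2 := by
  have hderiv : ∀ t ∈ Ici (0:ℝ),
      HasDerivWithinAt (fun s => ∑ i, φ s i ^ 2) (2 * N * (N + ν - 1)) (Ici 0) t := by
    intro t ht
    have hsum : HasDerivWithinAt (fun s => ∑ i, φ s i ^ 2)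
        (∑ i, ((2 : ℕ) : ℝ) * φ t i ^ (2 - 1) * driftB ν (φ t) i) (Ici 0) t :=
      HasDerivWithinAt.fun_sum fun i _ => (hode t ht i).pow 2
    have hφt := sum_mul_driftB ν (hint t ht).1.injective (hint t ht).2
    simp only [Nat.cast_ofNat, Nat.add_one_sub_one, pow_one, mul_assoc, ← mul_sum, hφt,
      Fintype.card_fin] at hsum
    convert hsum using 1
    ring
  intro t ht
  simp only [EuclideanSpace.real_norm_sq_eq, WithLp.equiv_symm_apply]
  simpa [hφ0] using eq_mul_sub_add_of_hasDerivWithinAt_Ici hderiv t ht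

/-- Growth of the Euclidean norm along solutions of the ODE of type `B_N`:
`‖φ(t)‖² = 2N(N + ν - 1)t + ‖x‖²`. -/
theorem statement10 (N : ℕ) (hN : 1 ≤ N) (ν : ℝ) (hν : 0 < ν)
    (x : Fin N → ℝ) (hx : interiorB x)
    (φ : ℝ → Fin N → ℝ) (hφ0 : φ 0 = x)
    (hint : ∀ t ∈ Set.Ici (0:ℝ), interiorB (φ t))
    (hode : solvesB ν φ) :
    ∀ t ∈ Set.Ici (0:ℝ),
      ‖(WithLp.equiv 2 (Fin N → ℝ)).symm (φ t)‖^2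
        = 2 * N * (N + ν - 1) * t + ‖(WithLp.equiv 2 (Fin N → ℝ)).symm x‖^2 :=
  statement10_general N ν x φ hφ0 hint hode
end
end

section
/- Let N ≥ 1, let ν > 0, and let z_1 > z_2 > … > z_N > 0 be real numbers that are precisely the zeros of the Laguerre polynomial L_N^{(ν−1)}. Define y ∈ ℝ^N by y_i := √(2 z_i) and the symmetric matrix A_ν ∈ ℝ^{N×N} by A_{ν,ij} := 1/(y_i − y_j)² − 1/(y_i + y_j)² for i ≠ j and A_{ν,ii} := ∑_{j≠i} ( −1/(y_i − y_j)² − 1/(y_i + y_j)² ) − ν/y_i². Then the matrix E − 2A_ν has eigenvalues 2, 4, …, 2N (counted with multiplicity), independently of ν. -/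
open scoped BigOperators
open Polynomial

noncomputable section

/-- The `n`-th Laguerre polynomial `L_n^{(α)}` (as a function). -/
def laguerre (n : ℕ) (α : ℝ) (x : ℝ) : ℝ :=
  ∑ k ∈ Finset.range (n+1),
    ((∏ m ∈ Finset.range (n - k), (α + k + m + 1)) / (Nat.factorial (n - k))) *
      ((-x)^k / (Nat.factorial k))

/-!
At each zero `z_i` of `L = L_N^{(ν-1)}`, Laguerre's equation `x L'' + (ν - x) L' + N L = 0`
together with `L''(z_i) = 2 L'(z_i) ∑_{j ≠ i} 1 / (z_i - z_j)` gives Stieltjes' relation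
`∑_{j ≠ i} 1 / (z_i - z_j) = (z_i - ν) / (2 z_i)`.

Since `y_i² = 2 z_i`, conjugating `A_ν` by `diag(y)` gives a matrix `K` in the `z_i` alone, and
Stieltjes' relation shows that `E - 2K` sends the column `(z_i ^ m)_i` to `(P_m(z_i))_i` for a
polynomial `P_m` of degree `m` with leading coefficient `2m + 2`. Hence `E - 2A_ν` is conjugate,
by `diag(y)` times the Vandermonde matrix of the distinct `z_i`, to an upper triangular matrix
with diagonal `2, 4, …, 2N`.
-/

open Finset

namespace Polynomial

theorem eq_C_leadingCoeff_mul_prod_X_sub_C {R ι : Type*} [CommRing R] [IsDomain R] [Fintype ι]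
    {p : R[X]} (hp : p ≠ 0) (hdeg : p.natDegree ≤ Fintype.card ι) {z : ι → R}
    (hz : Function.Injective z) (hroot : ∀ i, p.IsRoot (z i)) :
    p = C p.leadingCoeff * ∏ i, (X - C (z i)) := by
  have hle : univ.val.map z ≤ p.roots :=
    (Multiset.le_iff_subset (univ.nodup.map hz)).mpr fun x hx => by
      obtain ⟨i, -, rfl⟩ := Multiset.mem_map.mp hx
      exact (mem_roots hp).mpr (hroot i)
  have hcard : Multiset.card (univ.val.map z) = Fintype.card ι := by simp
  have hroots : univ.val.map z = p.roots :=
    Multiset.eq_of_le_of_card_le hle (by rw [hcard]; exact p.card_roots'.trans hdeg)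
  have hsplit : Multiset.card p.roots = p.natDegree :=
    le_antisymm p.card_roots' (by rw [← hroots, hcard]; exact hdeg)
  conv_lhs => rw [← C_leadingCoeff_mul_prod_multiset_X_sub_C hsplit, ← hroots, Multiset.map_map]
  rfl

variable {K ι : Type*} [Field K] [DecidableEq ι]

theorem eval_derivative_prod_X_sub_C (s : Finset ι) (z : ι → K) {x : K}
    (hx : ∀ j ∈ s, x - z j ≠ 0) :
    (derivative (∏ j ∈ s, (X - C (z j)))).eval x
      = (∏ j ∈ s, (x - z j)) * ∑ j ∈ s, 1 / (x - z j) := by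
  rw [derivative_prod_finset, eval_finsetSum, mul_sum]
  refine sum_congr rfl fun j hj => ?_
  rw [← mul_prod_erase s _ hj]
  simp only [eval_mul, eval_prod, derivative_X_sub_C, eval_one, eval_sub, eval_X, eval_C]
  field_simp [hx j hj]

variable [Fintype ι] {z : ι → K}

theorem eval_derivative_prod_X_sub_C_self (i : ι) :
    (derivative (∏ j, (X - C (z j)))).eval (z i) = ∏ j ∈ univ.erase i, (z i - z j) := by
  rw [← mul_prod_erase univ _ (mem_univ i)]
  simp [eval_prod]

theorem eval_derivative_prod_X_sub_C_ne_zero (hz : Function.Injective z) (i : ι) :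
    (derivative (∏ j, (X - C (z j)))).eval (z i) ≠ 0 := by
  rw [eval_derivative_prod_X_sub_C_self]
  exact prod_ne_zero_iff.mpr fun j hj => sub_ne_zero.mpr (hz.ne (ne_of_mem_erase hj).symm)

theorem eval_derivative_derivative_prod_X_sub_C (hz : Function.Injective z) (i : ι) :
    (derivative (derivative (∏ j, (X - C (z j))))).eval (z i)
      = 2 * (derivative (∏ j, (X - C (z j)))).eval (z i)
        * ∑ j ∈ univ.erase i, 1 / (z i - z j) := by
  have hne : ∀ j ∈ univ.erase i, z i - z j ≠ 0 := fun j hj =>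
    sub_ne_zero.mpr (hz.ne (ne_of_mem_erase hj).symm)
  rw [← mul_prod_erase univ _ (mem_univ i)]
  simp only [derivative_mul, one_mul, derivative_add, eval_add, eval_mul, eval_sub, eval_X,
    eval_C, sub_self, zero_mul, add_zero, derivative_sub, derivative_X, derivative_C, sub_zero]
  rw [eval_derivative_prod_X_sub_C _ _ hne]
  simp only [eval_prod, eval_sub, eval_X, eval_C]
  ring

end Polynomial

theorem Matrix.charpoly_eq_of_mul_eq_mul {ι R : Type*} [Fintype ι] [DecidableEq ι] [CommRing R]
    {B T V : Matrix ι ι R} (hV : IsUnit V.det) (h : B * V = V * T) :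
    B.charpoly = T.charpoly := by
  have hV' : IsUnit V := (Matrix.isUnit_iff_isUnit_det V).mpr hV
  have hB : B = hV'.unit.val * T * hV'.unit.val⁻¹ := by
    rw [IsUnit.unit_spec, ← h, Matrix.mul_nonsing_inv_cancel_right _ _ hV]
  rw [hB, Matrix.charpoly_units_conj]

theorem add_mul_pow_sub_two_mul_pow_succ (a b : ℝ) (m : ℕ) :
    (a + b) * a ^ m - 2 * b ^ (m + 1)
      = (2 * m + 1) * a ^ m * (a - b)
        - (a - b) ^ 2 * ∑ k ∈ range m, (2 * k + 2) * a ^ k * b ^ (m - 1 - k) := by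
  induction m with
  | zero => simp; ring
  | succ m ih =>
    have hrec : ∑ k ∈ range (m + 1), (2 * (k : ℝ) + 2) * a ^ k * b ^ (m + 1 - 1 - k)
        = b * ∑ k ∈ range m, (2 * k + 2) * a ^ k * b ^ (m - 1 - k) + (2 * m + 2) * a ^ m := by
      rw [sum_range_succ, mul_sum, Nat.add_sub_cancel, Nat.sub_self, pow_zero, mul_one]
      congr 1
      refine sum_congr rfl fun k hk => ?_
      rw [show m - k = m - 1 - k + 1 by have := mem_range.mp hk; omega, pow_succ]
      ring
    rw [hrec]
    push_cast
    linear_combination b * ih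

theorem sum_range_two_mul_add_two (m : ℕ) :
    ∑ k ∈ range m, (2 * (k : ℝ) + 2) = m ^ 2 + m := by
  induction m with
  | zero => simp
  | succ m ih => rw [sum_range_succ, ih]; push_cast; ring

theorem natCast_mul_pow_div_self {x : ℝ} (hx : x ≠ 0) (m : ℕ) :
    m * x ^ m / x = m * x ^ (m - 1) := by
  cases m with
  | zero => simp
  | succ m => field_simp; rw [Nat.add_sub_cancel, pow_succ']

theorem one_div_sub_sq_sub_one_div_add_sq {a b u v : ℝ} (hu : a ^ 2 = 2 * u)
    (hv : b ^ 2 = 2 * v) (hsub : a - b ≠ 0) (hadd : a + b ≠ 0) :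
    1 / (a - b) ^ 2 - 1 / (a + b) ^ 2 = a * b / (u - v) ^ 2 := by
  obtain rfl : u = a ^ 2 / 2 := by linarith
  obtain rfl : v = b ^ 2 / 2 := by linarith
  rw [show a ^ 2 / 2 - b ^ 2 / 2 = (a - b) * (a + b) / 2 by ring]
  field_simp
  ring

theorem neg_one_div_sub_sq_sub_one_div_add_sq {a b u v : ℝ} (hu : a ^ 2 = 2 * u)
    (hv : b ^ 2 = 2 * v) (hsub : a - b ≠ 0) (hadd : a + b ≠ 0) :
    -1 / (a - b) ^ 2 - 1 / (a + b) ^ 2 = -((u + v) / (u - v) ^ 2) := by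
  obtain rfl : u = a ^ 2 / 2 := by linarith
  obtain rfl : v = b ^ 2 / 2 := by linarith
  rw [show a ^ 2 / 2 - b ^ 2 / 2 = (a - b) * (a + b) / 2 by ring]
  field_simp
  ring

def laguerreCoeff (n : ℕ) (α : ℝ) (k : ℕ) : ℝ :=
  (∏ m ∈ range (n - k), (α + k + m + 1)) / (n - k).factorial * ((-1) ^ k / k.factorial)

def laguerrePoly (n : ℕ) (α : ℝ) : ℝ[X] :=
  ∑ k ∈ range (n + 1), C (laguerreCoeff n α k) * X ^ k

section Laguerre

variable (n : ℕ) (α : ℝ)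

theorem eval_laguerrePoly (x : ℝ) : (laguerrePoly n α).eval x = laguerre n α x := by
  simp only [laguerrePoly, laguerre, laguerreCoeff, eval_finsetSum, eval_mul, eval_C, eval_pow,
    eval_X, neg_pow x]
  exact sum_congr rfl fun k _ => by ring

theorem coeff_laguerrePoly (k : ℕ) :
    (laguerrePoly n α).coeff k = if k ≤ n then laguerreCoeff n α k else 0 := by
  simp [laguerrePoly, coeff_C_mul, coeff_X_pow]

theorem laguerreCoeff_succ {k : ℕ} (hk : k < n) :
    (k + 1) * (k + α + 1) * laguerreCoeff n α (k + 1) = (k - n) * laguerreCoeff n α k := by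
  obtain ⟨d, rfl⟩ : ∃ d, n = k + 1 + d := ⟨n - (k + 1), by omega⟩
  have hprod : ∏ m ∈ range (d + 1), (α + k + m + 1)
      = (α + k + 1) * ∏ m ∈ range d, (α + (k + 1 : ℕ) + m + 1) := by
    rw [prod_range_succ', mul_comm]
    congr 1
    · simp
    · exact prod_congr rfl fun m _ => by push_cast; ring
  simp only [laguerreCoeff, show k + 1 + d - k = d + 1 by omega,
    show k + 1 + d - (k + 1) = d by omega, hprod, Nat.factorial_succ]
  push_cast
  field_simp
  ring

theorem coeff_laguerrePoly_succ (k : ℕ) :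
    (k + 1) * (k + α + 1) * (laguerrePoly n α).coeff (k + 1)
      = (k - n) * (laguerrePoly n α).coeff k := by
  simp only [coeff_laguerrePoly]
  rcases lt_trichotomy k n with hk | rfl | hk
  · rw [if_pos (Nat.succ_le_of_lt hk), if_pos hk.le, laguerreCoeff_succ n α hk]
  · simp
  · simp [show ¬ k ≤ n by omega, show ¬ k + 1 ≤ n by omega]

theorem laguerrePoly_ode :
    X * derivative (derivative (laguerrePoly n α))
      + (C (α + 1) - X) * derivative (laguerrePoly n α)
      + C (n : ℝ) * laguerrePoly n α = 0 := by
  ext k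
  have hrec := coeff_laguerrePoly_succ n α k
  rcases k with _ | k
  · simp only [coeff_add, sub_mul, coeff_sub, mul_coeff_zero, coeff_X_zero, zero_mul,
      coeff_C_zero, coeff_derivative, coeff_zero]
    push_cast at hrec ⊢
    linear_combination hrec
  · simp only [coeff_add, sub_mul, coeff_sub, coeff_C_mul, coeff_X_mul, coeff_derivative,
      coeff_zero]
    push_cast at hrec ⊢
    linear_combination hrec

theorem laguerrePoly_ne_zero : laguerrePoly n α ≠ 0 := by
  intro h
  have := congrArg (coeff · n) h
  simp [coeff_laguerrePoly, laguerreCoeff, Nat.factorial_ne_zero] at this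

theorem natDegree_laguerrePoly_le : (laguerrePoly n α).natDegree ≤ n :=
  natDegree_le_iff_coeff_eq_zero.mpr fun k hk => by
    rw [coeff_laguerrePoly, if_neg (by exact_mod_cast hk.not_ge)]

end Laguerre

theorem sum_one_div_sub_of_laguerre_eq_zero {n : ℕ} {α : ℝ} {z : Fin n → ℝ}
    (hz : Function.Injective z) (hz0 : ∀ i, z i ≠ 0) (hroot : ∀ i, laguerre n α (z i) = 0)
    (i : Fin n) :
    ∑ j ∈ univ.erase i, 1 / (z i - z j) = (z i - α - 1) / (2 * z i) := by
  have hL := laguerrePoly_ne_zero n α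
  have hfactor : laguerrePoly n α = C (laguerrePoly n α).leadingCoeff * ∏ j, (X - C (z j)) :=
    eq_C_leadingCoeff_mul_prod_X_sub_C hL (by simpa using natDegree_laguerrePoly_le n α) hz
      fun j => by rw [IsRoot, eval_laguerrePoly, hroot]
  have hroot_i : (∏ j, (X - C (z j))).eval (z i) = 0 := by
    rw [eval_prod]
    exact prod_eq_zero (mem_univ i) (by simp)
  have hode := congrArg (eval (z i)) (laguerrePoly_ode n α)
  rw [hfactor] at hode
  simp only [derivative_C_mul, eval_add, eval_mul, eval_sub, eval_X, eval_C, hroot_i,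
    eval_derivative_derivative_prod_X_sub_C hz i, eval_zero, mul_zero, add_zero] at hode
  have hc : (laguerrePoly n α).leadingCoeff ≠ 0 := leadingCoeff_ne_zero.mpr hL
  have hq' := eval_derivative_prod_X_sub_C_ne_zero hz i
  have hzi := hz0 i
  field_simp
  apply mul_left_cancel₀ (mul_ne_zero hc hq')
  linear_combination hode

section StieltjesMatrix

variable {n : ℕ} (z : Fin n → ℝ) (ν : ℝ)

/-- `diag(y)⁻¹ A_ν diag(y)`, written in the variables `z_i = y_i² / 2`. -/
def stieltjesMatrix : Matrix (Fin n) (Fin n) ℝ :=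
  Matrix.of fun i j => if i = j then
      -(∑ l ∈ univ.erase i, (z i + z l) / (z i - z l) ^ 2) - ν / (2 * z i)
    else 2 * z j / (z i - z j) ^ 2

/-- The image of `x ^ m` under `1 - 2 • stieltjesMatrix z ν`, acting on values at the `z i`. -/
def stieltjesColumn (m : ℕ) : ℝ[X] :=
  C (2 * (m : ℝ) + 2) * X ^ m + C (2 * m * (m + 1 - ν)) * X ^ (m - 1)
    - ∑ k ∈ range m, C (2 * (2 * (k : ℝ) + 2) * ∑ j, z j ^ (m - 1 - k)) * X ^ k

theorem natDegree_stieltjesColumn_le (m : ℕ) : (stieltjesColumn z ν m).natDegree ≤ m := by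
  unfold stieltjesColumn
  refine (natDegree_sub_le_of_le (natDegree_add_le_of_degree_le ?_ ?_) ?_).trans
    (max_self m).le
  · exact natDegree_C_mul_X_pow_le _ _
  · exact (natDegree_C_mul_X_pow_le _ _).trans (Nat.sub_le m 1)
  · exact natDegree_sum_le_of_forall_le _ _ fun k hk =>
      (natDegree_C_mul_X_pow_le _ _).trans (mem_range.mp hk).le

theorem coeff_stieltjesColumn_self (m : ℕ) : (stieltjesColumn z ν m).coeff m = 2 * m + 2 := by
  rcases m with _ | m
  · simp [stieltjesColumn]
  · simp only [stieltjesColumn, coeff_sub, coeff_add, coeff_C_mul_X_pow, finsetSum_coeff]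
    rw [sum_eq_zero fun k hk => if_neg (mem_range.mp hk).ne']
    simp

def stieltjesCoeffMatrix : Matrix (Fin n) (Fin n) ℝ :=
  Matrix.of fun l m => (stieltjesColumn z ν m).coeff l

theorem charpoly_stieltjesCoeffMatrix :
    (stieltjesCoeffMatrix z ν).charpoly = ∏ k ∈ range n, (X - C (2 * ((k : ℝ) + 1))) := by
  have hupper : (stieltjesCoeffMatrix z ν).IsUpperTriangular := fun l m hml =>
    coeff_eq_zero_of_natDegree_lt ((natDegree_stieltjesColumn_le z ν m).trans_lt hml)
  rw [Matrix.charpoly_of_isUpperTriangular _ hupper,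
    ← Fin.prod_univ_eq_prod_range (fun k => X - C (2 * ((k : ℝ) + 1)))]
  refine prod_congr rfl fun k _ => ?_
  rw [stieltjesCoeffMatrix, Matrix.of_apply, coeff_stieltjesColumn_self]
  congr 2
  ring

theorem eval_stieltjesColumn (m : ℕ) (x : ℝ) :
    (stieltjesColumn z ν m).eval x = (2 * m + 2) * x ^ m + 2 * m * (m + 1 - ν) * x ^ (m - 1)
      - 2 * ∑ k ∈ range m, (2 * k + 2) * (∑ j, z j ^ (m - 1 - k)) * x ^ k := by
  simp only [stieltjesColumn, eval_sub, eval_add, eval_mul, eval_C, eval_pow, eval_X,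
    eval_finsetSum]
  rw [mul_sum]
  congr 1
  exact sum_congr rfl fun k _ => by ring

variable {z ν}

theorem sum_stieltjesMatrix_mul_pow (i : Fin n) (m : ℕ) :
    ∑ j, stieltjesMatrix z ν i j * z j ^ m = -(ν * z i ^ m / (2 * z i))
      - ∑ j ∈ univ.erase i, ((z i + z j) * z i ^ m - 2 * z j ^ (m + 1)) / (z i - z j) ^ 2 := by
  have hoff : ∀ j ∈ univ.erase i,
      stieltjesMatrix z ν i j * z j ^ m = 2 * z j ^ (m + 1) / (z i - z j) ^ 2 := fun j hj => by
    simp only [stieltjesMatrix, Matrix.of_apply, if_neg (ne_of_mem_erase hj).symm]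
    ring
  have hterm : ∀ j ∈ univ.erase i, ((z i + z j) * z i ^ m - 2 * z j ^ (m + 1)) / (z i - z j) ^ 2
      = (z i + z j) / (z i - z j) ^ 2 * z i ^ m - 2 * z j ^ (m + 1) / (z i - z j) ^ 2 :=
    fun j _ => by ring
  have hdiag : stieltjesMatrix z ν i i
      = -(∑ j ∈ univ.erase i, (z i + z j) / (z i - z j) ^ 2) - ν / (2 * z i) := if_pos rfl
  rw [← add_sum_erase _ _ (mem_univ i), sum_congr rfl hoff, sum_congr rfl hterm, sum_sub_distrib,
    ← sum_mul, hdiag]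
  ring

theorem sub_two_mul_sum_stieltjesMatrix_mul_pow (hz : Function.Injective z)
    (hz0 : ∀ i, z i ≠ 0)
    (hS : ∀ i, ∑ j ∈ univ.erase i, 1 / (z i - z j) = (z i - ν) / (2 * z i))
    (i : Fin n) (m : ℕ) :
    z i ^ m - 2 * ∑ j, stieltjesMatrix z ν i j * z j ^ m
      = (stieltjesColumn z ν m).eval (z i) := by
  have hne : ∀ j ∈ univ.erase i, z i - z j ≠ 0 := fun j hj =>
    sub_ne_zero.mpr (hz.ne (ne_of_mem_erase hj).symm)
  have hsplit :
      ∑ j ∈ univ.erase i, ((z i + z j) * z i ^ m - 2 * z j ^ (m + 1)) / (z i - z j) ^ 2 =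
        (2 * m + 1) * z i ^ m * ∑ j ∈ univ.erase i, 1 / (z i - z j)
        - ∑ k ∈ range m, (2 * k + 2) * z i ^ k * ∑ j ∈ univ.erase i, z j ^ (m - 1 - k) := by
    simp_rw [mul_sum]
    rw [sum_comm (s := range m), ← sum_sub_distrib]
    refine sum_congr rfl fun j hj => ?_
    rw [add_mul_pow_sub_two_mul_pow_succ]
    generalize ∑ k ∈ range m, (2 * (k : ℝ) + 2) * z i ^ k * z j ^ (m - 1 - k) = S
    field_simp [hne j hj]
  have hdiag : ∑ k ∈ range m, (2 * (k : ℝ) + 2) * z i ^ k * z i ^ (m - 1 - k)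
      = (m ^ 2 + m) * z i ^ (m - 1) := by
    rw [← sum_range_two_mul_add_two, sum_mul]
    refine sum_congr rfl fun k hk => ?_
    rw [mul_assoc, ← pow_add, show k + (m - 1 - k) = m - 1 by have := mem_range.mp hk; omega]
  have hsum :
      ∑ k ∈ range m, (2 * (k : ℝ) + 2) * z i ^ k * ∑ j ∈ univ.erase i, z j ^ (m - 1 - k) =
        ∑ k ∈ range m, (2 * k + 2) * (∑ j, z j ^ (m - 1 - k)) * z i ^ k
        - (m ^ 2 + m) * z i ^ (m - 1) := by
    rw [← hdiag, ← sum_sub_distrib]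
    exact sum_congr rfl fun k _ => by rw [sum_erase_eq_sub (mem_univ i)]; ring
  rw [sum_stieltjesMatrix_mul_pow, hsplit, hS, eval_stieltjesColumn, hsum]
  generalize ∑ k ∈ range m, (2 * (k : ℝ) + 2) * (∑ j, z j ^ (m - 1 - k)) * z i ^ k = T
  -- the `1 / z i` terms combine into `m * z i ^ m / z i`, a polynomial in `z i` even for `m = 0`
  have hpow := natCast_mul_pow_div_self (hz0 i) m
  have hinv := mul_inv_cancel₀ (hz0 i)
  linear_combination (-2 * ν) * hpow + (2 * m + 1) * z i ^ m * hinv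

theorem one_sub_two_smul_stieltjesMatrix_mul_vandermonde (hz : Function.Injective z)
    (hz0 : ∀ i, z i ≠ 0)
    (hS : ∀ i, ∑ j ∈ univ.erase i, 1 / (z i - z j) = (z i - ν) / (2 * z i)) :
    (1 - 2 • stieltjesMatrix z ν) * Matrix.vandermonde z
      = Matrix.vandermonde z * stieltjesCoeffMatrix z ν := by
  ext i m
  have hdeg : (stieltjesColumn z ν m).natDegree < n :=
    (natDegree_stieltjesColumn_le z ν m).trans_lt m.isLt
  rw [sub_mul, one_mul, Matrix.smul_mul, Matrix.sub_apply, Matrix.smul_apply, Matrix.mul_apply,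
    Matrix.mul_apply, nsmul_eq_mul, Nat.cast_ofNat, Matrix.vandermonde_apply]
  simp only [Matrix.vandermonde_apply, stieltjesCoeffMatrix, Matrix.of_apply]
  rw [sub_two_mul_sum_stieltjesMatrix_mul_pow hz hz0 hS, eval_eq_sum_range' hdeg,
    ← Fin.sum_univ_eq_sum_range (fun l => (stieltjesColumn z ν m).coeff l * z i ^ l)]
  exact sum_congr rfl fun l _ => mul_comm _ _

end StieltjesMatrix

theorem mul_diagonal_eq_diagonal_mul_stieltjesMatrix {n : ℕ} {ν : ℝ} {z y : Fin n → ℝ}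
    {A : Matrix (Fin n) (Fin n) ℝ} (hz : Function.Injective z) (hy : ∀ i, 0 < y i)
    (hyz : ∀ i, y i ^ 2 = 2 * z i)
    (hA : ∀ i j, A i j = if i = j then
        (∑ l ∈ univ.erase i, (-1 / (y i - y l) ^ 2 - 1 / (y i + y l) ^ 2)) - ν / y i ^ 2
      else 1 / (y i - y j) ^ 2 - 1 / (y i + y j) ^ 2) :
    A * Matrix.diagonal y = Matrix.diagonal y * stieltjesMatrix z ν := by
  have hsub : ∀ {i j}, i ≠ j → y i - y j ≠ 0 := fun {i j} hij h => hz.ne hij <| by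
    have := congrArg (· ^ 2) (sub_eq_zero.mp h)
    simp only [hyz] at this
    linarith
  have hadd : ∀ i j, y i + y j ≠ 0 := fun i j => by linarith [hy i, hy j]
  ext i j
  rw [Matrix.mul_diagonal, Matrix.diagonal_mul, hA, stieltjesMatrix, Matrix.of_apply]
  split_ifs with hij
  · subst hij
    rw [sum_congr rfl fun l hl => neg_one_div_sub_sq_sub_one_div_add_sq (hyz i) (hyz l)
      (hsub (ne_of_mem_erase hl).symm) (hadd i l), sum_neg_distrib, hyz]
    ring
  · rw [one_div_sub_sq_sub_one_div_add_sq (hyz i) (hyz j) (hsub hij) (hadd i j)]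
    have hne : z i - z j ≠ 0 := sub_ne_zero.mpr (hz.ne hij)
    field_simp
    rw [hyz]
    ring

theorem statement12_general (N : ℕ) (ν : ℝ)
    (z : Fin N → ℝ) (hz : StrictAnti z) (hzpos : ∀ i, 0 < z i)
    (hzero : ∀ i, laguerre N (ν - 1) (z i) = 0)
    (y : Fin N → ℝ) (hy : ∀ i, y i = Real.sqrt (2 * z i))
    (A : Matrix (Fin N) (Fin N) ℝ)
    (hA : ∀ i j : Fin N, A i j =
      if i = j then
        (∑ l ∈ Finset.univ.erase i, (-1/(y i - y l)^2 - 1/(y i + y l)^2)) - ν/(y i)^2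
      else 1/(y i - y j)^2 - 1/(y i + y j)^2) :
    (1 - 2 • A).charpoly = ∏ k ∈ Finset.range N, (X - C (2 * ((k : ℝ) + 1))) := by
  have hinj := hz.injective
  have hz0 : ∀ i, z i ≠ 0 := fun i => (hzpos i).ne'
  have hypos : ∀ i, 0 < y i := fun i => by
    rw [hy]; exact Real.sqrt_pos.mpr (by linarith [hzpos i])
  have hyz : ∀ i, y i ^ 2 = 2 * z i := fun i => by
    rw [hy, Real.sq_sqrt (by linarith [hzpos i])]
  have hS : ∀ i, ∑ j ∈ univ.erase i, 1 / (z i - z j) = (z i - ν) / (2 * z i) := fun i => by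
    rw [sum_one_div_sub_of_laguerre_eq_zero hinj hz0 hzero i]
    ring
  have hAK :
      (1 - 2 • A) * Matrix.diagonal y = Matrix.diagonal y * (1 - 2 • stieltjesMatrix z ν) := by
    rw [sub_mul, mul_sub, one_mul, mul_one, Matrix.smul_mul, Matrix.mul_smul,
      mul_diagonal_eq_diagonal_mul_stieltjesMatrix hinj hypos hyz hA]
  have hKT := one_sub_two_smul_stieltjesMatrix_mul_vandermonde hinj hz0 hS
  have hV : IsUnit (Matrix.diagonal y * Matrix.vandermonde z).det := by
    rw [Matrix.det_mul, Matrix.det_diagonal, isUnit_iff_ne_zero]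
    exact mul_ne_zero (prod_ne_zero_iff.mpr fun i _ => (hypos i).ne')
      (Matrix.det_vandermonde_ne_zero_iff.mpr hinj)
  have hconj : (1 - 2 • A) * (Matrix.diagonal y * Matrix.vandermonde z)
      = Matrix.diagonal y * Matrix.vandermonde z * stieltjesCoeffMatrix z ν := by
    rw [← mul_assoc, hAK, mul_assoc, hKT, mul_assoc]
  rw [Matrix.charpoly_eq_of_mul_eq_mul hV hconj, charpoly_stieltjesCoeffMatrix]

/-- For `y_i = √(2 z_i)` with `z` the ordered zeros of the Laguerre polynomial
`L_N^{(ν-1)}`, the matrix `A_ν` with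
`A_{ν,ij} = 1/(y_i - y_j)² - 1/(y_i + y_j)²` for `i ≠ j` and
`A_{ν,ii} = ∑_{j≠i}(-1/(y_i - y_j)² - 1/(y_i + y_j)²) - ν/y_i²`
is such that `E - 2A_ν` has eigenvalues `2, 4, …, 2N` counted with multiplicity
(expressed via the characteristic polynomial), independently of `ν`. -/
theorem statement12 (N : ℕ) (hN : 1 ≤ N) (ν : ℝ) (hν : 0 < ν)
    (z : Fin N → ℝ) (hz : StrictAnti z) (hzpos : ∀ i, 0 < z i)
    (hzero : ∀ i, laguerre N (ν - 1) (z i) = 0)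
    (hall : ∀ w : ℝ, laguerre N (ν - 1) w = 0 → ∃ i, w = z i)
    (y : Fin N → ℝ) (hy : ∀ i, y i = Real.sqrt (2 * z i))
    (A : Matrix (Fin N) (Fin N) ℝ)
    (hA : ∀ i j : Fin N, A i j =
      if i = j then
        (∑ l ∈ Finset.univ.erase i, (-1/(y i - y l)^2 - 1/(y i + y l)^2)) - ν/(y i)^2
      else 1/(y i - y j)^2 - 1/(y i + y j)^2) :
    (1 - 2 • A).charpoly = ∏ k ∈ Finset.range N, (X - C (2 * ((k : ℝ) + 1))) :=
  statement12_general N ν z hz hzpos hzero y hy A hA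
end
end
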